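/- There are exactly 15 unconditionally valid syllogistic moods (valid without existential import) among the 256 possible mood-figure combinations. -/

import Mathlib

/-- The four categorical proposition types. -/
inductive CatType where
  | A | E | I | O
  deriving DecidableEq

instance : Fintype CatType where
  elems := {.A, .E, .I, .O}
  complete := fun x => by cases x <;> simp

/-- Interpret a categorical proposition type applied to subject `X` and predicate `Y`. -/
def CatType.interp {U : Type} (t : CatType) (X Y : U → Prop) : Prop :=
  match t with
  | .A => ∀ x, X x → Y x
  | .E => ∀ x, X x → ¬ Y x
  | .I => ∃ x, X x ∧ Y x
  | .O => ∃ x, X x ∧ ¬ Y x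

/-- A syllogistic form: a figure (1–4) together with the types of the
major premise, minor premise, and conclusion. -/
structure SyllogisticForm where
  figure : Fin 4
  major : CatType
  minor : CatType
  concl : CatType
  deriving DecidableEq, Fintype

/-- The major premise of a form, given middle term `M` and major term `P`;
the position of the middle term depends on the figure. -/
def SyllogisticForm.majorProp (f : SyllogisticForm) {U : Type} (M P : U → Prop) : Prop :=
  match f.figure with
  | 0 => f.major.interp M P
  | 1 => f.major.interp P M
  | 2 => f.major.interp M P
  | 3 => f.major.interp P M

/-- The minor premise of a form, given subject term `S` and middle term `M`. -/
def SyllogisticForm.minorProp (f : SyllogisticForm) {U : Type} (S M : U → Prop) : Prop :=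
  match f.figure with
  | 0 => f.minor.interp S M
  | 1 => f.minor.interp S M
  | 2 => f.minor.interp M S
  | 3 => f.minor.interp M S

/-- Unconditional validity (no existential import): for every universe and every
assignment of terms, the premises entail the conclusion. -/
def SyllogisticForm.Valid (f : SyllogisticForm) : Prop :=
  ∀ (U : Type) (S M P : U → Prop),
    f.majorProp M P → f.minorProp S M → f.concl.interp S P

/-! Every invalid form already has a countermodel on a universe of three elements: a
countermodel only needs one witness for each particular premise and one refuting a universal
conclusion, since universal premises survive restriction to a sub-universe, and padding with
elements outside `S`, `M` and `P` changes no truth value. So an exhaustive search over `Fin 3`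
refutes every form outside the fifteen traditional moods, which are proved valid directly. -/

namespace CatType

instance decidableInterp {U : Type} [Fintype U] (t : CatType) (X Y : U → Prop)
    [DecidablePred X] [DecidablePred Y] : Decidable (t.interp X Y) := by
  cases t <;> unfold interp <;> infer_instance

end CatType

namespace SyllogisticForm

variable {U : Type}

instance decidableMajorProp [Fintype U] (f : SyllogisticForm) (M P : U → Prop)
    [DecidablePred M] [DecidablePred P] : Decidable (f.majorProp M P) := by
  unfold majorProp; split <;> infer_instance

instance decidableMinorProp [Fintype U] (f : SyllogisticForm) (S M : U → Prop)
    [DecidablePred S] [DecidablePred M] : Decidable (f.minorProp S M) := by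
  unfold minorProp; split <;> infer_instance

def ValidForBoolPreds (U : Type) (f : SyllogisticForm) : Prop :=
  ∀ S M P : U → Bool,
    f.majorProp (M ·) (P ·) → f.minorProp (S ·) (M ·) → f.concl.interp (S ·) (P ·)

instance [Fintype U] [DecidableEq U] (f : SyllogisticForm) :
    Decidable (f.ValidForBoolPreds U) := by
  unfold ValidForBoolPreds; infer_instance

theorem Valid.validForBoolPreds {f : SyllogisticForm} (h : f.Valid) (U : Type) :
    f.ValidForBoolPreds U :=
  fun S M P => h U (S ·) (M ·) (P ·)

/-- Barbara, Celarent, Darii, Ferio; Cesare, Camestres, Festino, Baroco;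
Disamis, Datisi, Bocardo, Ferison; Camenes, Dimaris, Fresison. -/
def unconditionalMoods : Finset SyllogisticForm :=
  {⟨0, .A, .A, .A⟩, ⟨0, .E, .A, .E⟩, ⟨0, .A, .I, .I⟩, ⟨0, .E, .I, .O⟩,
   ⟨1, .E, .A, .E⟩, ⟨1, .A, .E, .E⟩, ⟨1, .E, .I, .O⟩, ⟨1, .A, .O, .O⟩,
   ⟨2, .I, .A, .I⟩, ⟨2, .A, .I, .I⟩, ⟨2, .O, .A, .O⟩, ⟨2, .E, .I, .O⟩,
   ⟨3, .A, .E, .E⟩, ⟨3, .I, .A, .I⟩, ⟨3, .E, .I, .O⟩}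

theorem valid_of_mem_unconditionalMoods {f : SyllogisticForm} (hf : f ∈ unconditionalMoods) :
    f.Valid := by
  intro U S M P
  fin_cases hf <;> simp only [majorProp, minorProp, CatType.interp] <;> grind

set_option maxRecDepth 100000 in
theorem not_validForBoolPreds_fin_three_of_not_mem :
    ∀ f ∉ unconditionalMoods, ¬ f.ValidForBoolPreds (Fin 3) := by
  decide

theorem valid_iff_mem_unconditionalMoods (f : SyllogisticForm) :
    f.Valid ↔ f ∈ unconditionalMoods := by
  refine ⟨fun h => ?_, valid_of_mem_unconditionalMoods⟩
  by_contra hf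
  exact not_validForBoolPreds_fin_three_of_not_mem f hf (h.validForBoolPreds (Fin 3))

end SyllogisticForm

open Classical in
theorem fifteen_valid_moods :
    (Finset.univ.filter (fun f : SyllogisticForm => f.Valid)).card = 15 := by
  have h : Finset.univ.filter (fun f : SyllogisticForm => f.Valid) =
      SyllogisticForm.unconditionalMoods := by
    ext f
    simp [SyllogisticForm.valid_iff_mem_unconditionalMoods]
  rw [h]
  rfl
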